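/- arXiv:1812.06557 — 3 statements merged into one kernel-verified Lean document; each statement's English description precedes it below -/
import Mathlib

section
/- Let E be a finite-dimensional real inner product space, d ≥ 2 an integer, L_d > 0, M > 0, D > 0, 0 ≤ σ < 1, 0 < σ_l, and k ≥ 1 an integer. Let A_1, …, A_k > 0 and λ_1, …, λ_k > 0 be reals and y_1, …, y_k, x̃_0, …, x̃_{k−1} ∈ E such that: (i) Σ_{j=1}^{k} (A_j/λ_j)·‖y_j − x̃_{j−1}‖² ≤ D²/(1 − σ²); (ii) λ_j·‖y_j − x̃_{j−1}‖^{d−1} ≥ d!·σ_l/(L_d + M) for every 1 ≤ j ≤ k; (iii) A_k ≥ (1/4)·(Σ_{j=1}^{k} √λ_j)². Then A_k ≥ (1/4)·C^{−2p/q}·(Σ_{j=1}^{k} A_j^{1/q})^{2p}, where q = (3d+1)/(d−1), p = (3d+1)/(2(d+1)), and C = (D²/(1 − σ²))·((d!·σ_l)/(L_d + M))^{−2/(d−1)}. -/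
/-!
Write `c = d! σ_l / (L_d + M)` and `e = (d + 1) / (d - 1) = 1 + 2 / (d - 1)`. Raising (ii) to the
power `2 / (d - 1)` gives `λ_j ^ (-e) ≤ ‖y_j - x̃_{j-1}‖² / λ_j · c ^ (-2 / (d - 1))`, so (i) yields
`∑ A_j λ_j ^ (-e) ≤ C`. Since `e / q = 1 / (2p)`, Hölder's inequality with the conjugate exponents
`q, p` applied to `A_j ^ (1/q) = (A_j λ_j ^ (-e)) ^ (1/q) · (√λ_j) ^ (1/p)` gives
`(∑ A_j ^ (1/q)) ^ (2p) ≤ C ^ (2p/q) (∑ √λ_j)²`, and (iii) concludes.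
-/

open Real Finset

lemma rpow_neg_le_of_le_mul_pow {c l r : ℝ} {m : ℕ} (hm : m ≠ 0) (hc : 0 < c) (hl : 0 < l)
    (hr : 0 ≤ r) (h : c ≤ l * r ^ m) :
    l ^ (-(1 + 2 / m : ℝ)) ≤ r ^ 2 / l * c ^ (-(2 / m : ℝ)) := by
  have hpow : c ^ (2 / m : ℝ) ≤ l ^ (2 / m : ℝ) * r ^ 2 := by
    calc c ^ (2 / m : ℝ) ≤ (l * r ^ m) ^ (2 / m : ℝ) := by gcongr
      _ = l ^ (2 / m : ℝ) * r ^ 2 := by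
        rw [mul_rpow hl.le (by positivity), ← rpow_natCast r m, ← rpow_mul hr]
        field_simp
        norm_cast
  have hlm : 0 < l ^ (2 / m : ℝ) := by positivity
  have hcm : 0 < c ^ (2 / m : ℝ) := by positivity
  rw [neg_add, rpow_add hl, rpow_neg_one, rpow_neg hl.le, rpow_neg hc.le]
  field_simp
  exact hpow

lemma sum_mul_rpow_neg_le {ι : Type*} (s : Finset ι) {a l r : ι → ℝ} {c B : ℝ} {m : ℕ}
    (hm : m ≠ 0) (hc : 0 < c) (ha : ∀ i ∈ s, 0 ≤ a i) (hl : ∀ i ∈ s, 0 < l i)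
    (hr : ∀ i ∈ s, 0 ≤ r i) (h : ∀ i ∈ s, c ≤ l i * r i ^ m)
    (hB : ∑ i ∈ s, a i / l i * r i ^ 2 ≤ B) :
    ∑ i ∈ s, a i * l i ^ (-(1 + 2 / m : ℝ)) ≤ B * c ^ (-(2 / m : ℝ)) :=
  calc ∑ i ∈ s, a i * l i ^ (-(1 + 2 / m : ℝ))
      ≤ ∑ i ∈ s, a i * (r i ^ 2 / l i * c ^ (-(2 / m : ℝ))) := by
        refine sum_le_sum fun i hi => ?_
        gcongr
        · exact ha i hi
        · exact rpow_neg_le_of_le_mul_pow hm hc (hl i hi) (hr i hi) (h i hi)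
    _ = (∑ i ∈ s, a i / l i * r i ^ 2) * c ^ (-(2 / m : ℝ)) := by
        rw [sum_mul]; congr! 1 with i; ring
    _ ≤ B * c ^ (-(2 / m : ℝ)) := by gcongr

lemma sum_rpow_inv_le_of_holderConjugate {ι : Type*} (s : Finset ι) {a l : ι → ℝ} {e p q : ℝ}
    (hpq : q.HolderConjugate p) (he : e / q = 1 / (2 * p)) (ha : ∀ i ∈ s, 0 ≤ a i)
    (hl : ∀ i ∈ s, 0 < l i) :
    ∑ i ∈ s, a i ^ (1 / q) ≤
      (∑ i ∈ s, a i * l i ^ (-e)) ^ (1 / q) * (∑ i ∈ s, √(l i)) ^ (1 / p) := by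
  have hq := hpq.pos.ne'
  have hp := hpq.symm.pos.ne'
  have hsplit : ∀ i ∈ s, a i ^ (1 / q) = (a i * l i ^ (-e)) ^ (1 / q) * (√(l i)) ^ (1 / p) := by
    intro i hi
    have hli := hl i hi
    rw [mul_rpow (ha i hi) (by positivity), sqrt_eq_rpow, ← rpow_mul hli.le,
      ← rpow_mul hli.le, mul_assoc, ← rpow_add hli, neg_mul, ← div_eq_mul_one_div, he,
      one_div_mul_one_div, neg_add_cancel, rpow_zero, mul_one]
  have holder := inner_le_Lp_mul_Lq_of_nonneg s hpq
    (f := fun i => (a i * l i ^ (-e)) ^ (1 / q)) (g := fun i => (√(l i)) ^ (1 / p))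
    (fun i hi => by have := ha i hi; have := hl i hi; positivity) (fun i _ => by positivity)
  rw [sum_congr rfl hsplit]
  convert holder using 4 with i hi i hi
  · rw [← rpow_mul (by have := ha i hi; have := hl i hi; positivity), one_div_mul_cancel hq,
      rpow_one]
  · rw [← rpow_mul (sqrt_nonneg _), one_div_mul_cancel hp, rpow_one]

lemma sum_rpow_inv_rpow_le {ι : Type*} (s : Finset ι) {a l : ι → ℝ} {e p q : ℝ}
    (hpq : q.HolderConjugate p) (he : e / q = 1 / (2 * p)) (ha : ∀ i ∈ s, 0 ≤ a i)
    (hl : ∀ i ∈ s, 0 < l i) :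
    (∑ i ∈ s, a i ^ (1 / q)) ^ (2 * p) ≤
      (∑ i ∈ s, a i * l i ^ (-e)) ^ (2 * p / q) * (∑ i ∈ s, √(l i)) ^ 2 := by
  have hS : 0 ≤ ∑ i ∈ s, a i * l i ^ (-e) :=
    sum_nonneg fun i hi => by have := ha i hi; have := hl i hi; positivity
  have hT : 0 ≤ ∑ i ∈ s, √(l i) := sum_nonneg fun i _ => sqrt_nonneg _
  have hp := hpq.symm.pos
  calc (∑ i ∈ s, a i ^ (1 / q)) ^ (2 * p)
      ≤ ((∑ i ∈ s, a i * l i ^ (-e)) ^ (1 / q) * (∑ i ∈ s, √(l i)) ^ (1 / p)) ^ (2 * p) := by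
        gcongr
        · exact sum_nonneg fun i hi => rpow_nonneg (ha i hi) _
        · exact sum_rpow_inv_le_of_holderConjugate s hpq he ha hl
    _ = (∑ i ∈ s, a i * l i ^ (-e)) ^ (2 * p / q) * (∑ i ∈ s, √(l i)) ^ 2 := by
        rw [mul_rpow (by positivity) (by positivity), ← rpow_mul hS, ← rpow_mul hT,
          ← rpow_natCast]
        congr 2 <;> field_simp
        norm_num

lemma holderConjugate_of_tensor_degree {d : ℝ} (hd : 1 < d) :
    ((3 * d + 1) / (d - 1)).HolderConjugate ((3 * d + 1) / (2 * (d + 1))) := by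
  have hd0 : d - 1 ≠ 0 := by linarith
  refine ⟨?_, div_pos (by linarith) (by linarith), by positivity⟩
  field_simp
  ring

lemma rpow_neg_mul_rpow_le_one {x y r : ℝ} (hx : 0 ≤ x) (hxy : x ≤ y) (hr : 0 ≤ r) :
    y ^ (-r) * x ^ r ≤ 1 := by
  have hy := hx.trans hxy
  rw [rpow_neg hy]
  exact inv_mul_le_one_of_le₀ (rpow_le_rpow hx hxy hr) (by positivity)

theorem stmt2_general {E : Type*} [NormedAddCommGroup E]
    (d : ℕ) (hd : 2 ≤ d) (Ld M D σ σl : ℝ)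
    (hLd : 0 < Ld) (hM : 0 < M) (hσl : 0 < σl)
    (k : ℕ)
    (A lam : ℕ → ℝ) (y xt : ℕ → E)
    (hA : ∀ j, 1 ≤ j → j ≤ k → 0 < A j) (hlam : ∀ j, 1 ≤ j → j ≤ k → 0 < lam j)
    (h1 : ∑ j ∈ Finset.Icc 1 k, A j / lam j * ‖y j - xt (j - 1)‖ ^ 2 ≤ D ^ 2 / (1 - σ ^ 2))
    (h2 : ∀ j, 1 ≤ j → j ≤ k →
      (d.factorial : ℝ) * σl / (Ld + M) ≤ lam j * ‖y j - xt (j - 1)‖ ^ (d - 1))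
    (h3 : (1 / 4 : ℝ) * (∑ j ∈ Finset.Icc 1 k, Real.sqrt (lam j)) ^ 2 ≤ A k)
    (p q C : ℝ)
    (hq : q = (3 * (d : ℝ) + 1) / ((d : ℝ) - 1))
    (hp : p = (3 * (d : ℝ) + 1) / (2 * ((d : ℝ) + 1)))
    (hC : C = D ^ 2 / (1 - σ ^ 2) *
      ((d.factorial : ℝ) * σl / (Ld + M)) ^ (-(2 / ((d : ℝ) - 1)))) :
    (1 / 4 : ℝ) * C ^ (-(2 * p / q)) *
        (∑ j ∈ Finset.Icc 1 k, A j ^ (1 / q)) ^ (2 * p) ≤ A k := by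
  have hd1 : ((d - 1 : ℕ) : ℝ) = d - 1 := by rw [Nat.cast_sub (by omega), Nat.cast_one]
  have hd2 : (2 : ℝ) ≤ d := by exact_mod_cast hd
  have hd0 : (d : ℝ) - 1 ≠ 0 := by linarith
  replace hA : ∀ j ∈ Icc 1 k, 0 ≤ A j := fun j hj => (hA j (mem_Icc.1 hj).1 (mem_Icc.1 hj).2).le
  replace hlam : ∀ j ∈ Icc 1 k, 0 < lam j := fun j hj => hlam j (mem_Icc.1 hj).1 (mem_Icc.1 hj).2
  replace h2 := fun j hj => h2 j (mem_Icc.1 hj).1 (mem_Icc.1 hj).2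
  set S := ∑ j ∈ Icc 1 k, A j * lam j ^ (-(1 + 2 / ((d - 1 : ℕ) : ℝ)))
  have hS : 0 ≤ S := sum_nonneg fun j hj => by have := hA j hj; have := hlam j hj; positivity
  have hSC : S ≤ C := by
    rw [hC, ← hd1]
    exact sum_mul_rpow_neg_le _ (by omega) (by positivity) hA hlam
      (fun _ _ => norm_nonneg _) h2 h1
  have hpq : q.HolderConjugate p := hq ▸ hp ▸ holderConjugate_of_tensor_degree (by linarith)
  have he : (1 + 2 / ((d - 1 : ℕ) : ℝ)) / q = 1 / (2 * p) := by
    rw [hd1, hq, hp]; field_simp; ring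
  have hC0 : 0 ≤ C := hS.trans hSC
  calc (1 / 4 : ℝ) * C ^ (-(2 * p / q)) * (∑ j ∈ Icc 1 k, A j ^ (1 / q)) ^ (2 * p)
      ≤ (1 / 4 : ℝ) * C ^ (-(2 * p / q)) * (S ^ (2 * p / q) * (∑ j ∈ Icc 1 k, √(lam j)) ^ 2) := by
        gcongr
        exact sum_rpow_inv_rpow_le _ hpq he hA hlam
    _ = (1 / 4 : ℝ) * (C ^ (-(2 * p / q)) * S ^ (2 * p / q)) * (∑ j ∈ Icc 1 k, √(lam j)) ^ 2 := by
        ring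
    _ ≤ (1 / 4 : ℝ) * 1 * (∑ j ∈ Icc 1 k, √(lam j)) ^ 2 := by
        gcongr
        exact rpow_neg_mul_rpow_le_one hS hSC (div_nonneg (by linarith [hpq.symm.pos]) hpq.nonneg)
    _ ≤ A k := by rw [mul_one]; exact h3

theorem stmt2 {E : Type*} [NormedAddCommGroup E] [InnerProductSpace ℝ E]
    [FiniteDimensional ℝ E]
    (d : ℕ) (hd : 2 ≤ d) (Ld M D σ σl : ℝ)
    (hLd : 0 < Ld) (hM : 0 < M) (hD : 0 < D) (hσ0 : 0 ≤ σ) (hσ1 : σ < 1) (hσl : 0 < σl)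
    (k : ℕ) (hk : 1 ≤ k)
    (A lam : ℕ → ℝ) (y xt : ℕ → E)
    (hA : ∀ j, 1 ≤ j → j ≤ k → 0 < A j) (hlam : ∀ j, 1 ≤ j → j ≤ k → 0 < lam j)
    (h1 : ∑ j ∈ Finset.Icc 1 k, A j / lam j * ‖y j - xt (j - 1)‖ ^ 2 ≤ D ^ 2 / (1 - σ ^ 2))
    (h2 : ∀ j, 1 ≤ j → j ≤ k →
      (d.factorial : ℝ) * σl / (Ld + M) ≤ lam j * ‖y j - xt (j - 1)‖ ^ (d - 1))
    (h3 : (1 / 4 : ℝ) * (∑ j ∈ Finset.Icc 1 k, Real.sqrt (lam j)) ^ 2 ≤ A k)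
    (p q C : ℝ)
    (hq : q = (3 * (d : ℝ) + 1) / ((d : ℝ) - 1))
    (hp : p = (3 * (d : ℝ) + 1) / (2 * ((d : ℝ) + 1)))
    (hC : C = D ^ 2 / (1 - σ ^ 2) *
      ((d.factorial : ℝ) * σl / (Ld + M)) ^ (-(2 / ((d : ℝ) - 1)))) :
    (1 / 4 : ℝ) * C ^ (-(2 * p / q)) *
        (∑ j ∈ Finset.Icc 1 k, A j ^ (1 / q)) ^ (2 * p) ≤ A k :=
  stmt2_general d hd Ld M D σ σl hLd hM hσl k A lam y xt hA hlam h1 h2 h3 p q C hq hp hC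
end

section
/- Let d ≥ 2 be an integer, set p = (3d+1)/(2(d+1)) and q = (3d+1)/(d−1) (so that 2p/q = (d−1)/(d+1) < 1), let C > 0, and let (A_k)_{k≥1} be a sequence of positive reals satisfying A_k ≥ (1/4)·C^{−2p/q}·(Σ_{j=1}^{k} A_j^{1/q})^{2p} for every integer k ≥ 1. Then for every integer k ≥ 1, A_k ≥ T^{(d+1)/2}·k^{(3d+1)/2}, where T = (1/4)·C^{−2p/q}·(2/(d+1))^{2p}. -/
/-!
The recursion `A k ≥ c (∑_{j ≤ k} A j ^ θ) ^ s` is homogeneous of degree `s θ < 1` in `A`.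
Hence a nonnegative subsolution `X` stays below every positive supersolution `A`: at a first index
where `X k > A k`, the scaled sequence `r X` with `r = A k / X k < 1` lies below `A` up to `k`,
and homogeneity gives `r X k ≥ r ^ (s θ) X k`, which is impossible. The power profile
`E k ^ α`, with `α = s / (1 - s θ)` and `E ^ (1 - s θ) = c (1 - s θ) ^ s`, is such a
subsolution because `∑_{j ≤ k} j ^ (γ - 1) ≥ k ^ γ / γ` for `γ ≥ 1`.
-/

open Finset

theorem div_le_sum_Icc_rpow_sub_one {γ : ℝ} (hγ : 1 ≤ γ) (k : ℕ) :
    (k : ℝ) ^ γ / γ ≤ ∑ j ∈ Icc 1 k, (j : ℝ) ^ (γ - 1) := by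
  have hmono : MonotoneOn (fun x : ℝ => x ^ (γ - 1)) (Set.Icc 0 (0 + k)) :=
    fun x hx y _ hxy => Real.rpow_le_rpow hx.1 hxy (by linarith)
  calc (k : ℝ) ^ γ / γ = ∫ x in (0 : ℝ)..0 + k, x ^ (γ - 1) := by
        rw [zero_add, integral_rpow (Or.inl (by linarith)), sub_add_cancel,
          Real.zero_rpow (by linarith), sub_zero]
    _ ≤ ∑ i ∈ range k, ((0 : ℝ) + ↑(i + 1)) ^ (γ - 1) := hmono.integral_le_sum
    _ = ∑ j ∈ Icc 1 k, (j : ℝ) ^ (γ - 1) := by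
      simp_rw [zero_add, range_eq_Ico, sum_Ico_add' (fun i : ℕ => (i : ℝ) ^ (γ - 1)) 0 k 1,
        zero_add, Ico_add_one_right_eq_Icc]

variable {c θ s : ℝ}

theorem sum_rpow_recursion_comparison (hc : 0 ≤ c) (hθ : 0 ≤ θ) (hs : 0 ≤ s)
    (hsθ : s * θ < 1) {X A : ℕ → ℝ} (hX : ∀ k, 1 ≤ k → 0 ≤ X k) (hA : ∀ k, 1 ≤ k → 0 < A k)
    (hXsub : ∀ k, 1 ≤ k → X k ≤ c * (∑ j ∈ Icc 1 k, X j ^ θ) ^ s)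
    (hAsup : ∀ k, 1 ≤ k → c * (∑ j ∈ Icc 1 k, A j ^ θ) ^ s ≤ A k) :
    ∀ k, 1 ≤ k → X k ≤ A k := by
  intro k
  induction k using Nat.strong_induction_on with
  | _ k ih =>
  intro hk
  by_contra! hlt
  have hXk : 0 < X k := (hA k hk).trans hlt
  set r := A k / X k
  have hr0 : 0 < r := div_pos (hA k hk) hXk
  have hr1 : r < 1 := (div_lt_one hXk).mpr hlt
  have hrX : r * X k = A k := div_mul_cancel₀ _ hXk.ne'
  have hsum : r ^ θ * ∑ j ∈ Icc 1 k, X j ^ θ ≤ ∑ j ∈ Icc 1 k, A j ^ θ := by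
    rw [mul_sum]
    refine sum_le_sum fun j hj => ?_
    obtain ⟨hj1, hjk⟩ := mem_Icc.mp hj
    rw [← Real.mul_rpow hr0.le (hX j hj1)]
    refine Real.rpow_le_rpow (mul_nonneg hr0.le (hX j hj1)) ?_ hθ
    rcases hjk.lt_or_eq with hjk | rfl
    · exact (mul_le_of_le_one_left (hX j hj1) hr1.le).trans (ih j hjk hj1)
    · exact hrX.le
  have hsum_nonneg : 0 ≤ ∑ j ∈ Icc 1 k, X j ^ θ :=
    sum_nonneg fun j hj => Real.rpow_nonneg (hX j (mem_Icc.mp hj).1) θ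
  have hhom : r ^ (s * θ) * X k ≤ r * X k := calc
    r ^ (s * θ) * X k ≤ r ^ (s * θ) * (c * (∑ j ∈ Icc 1 k, X j ^ θ) ^ s) := by
      gcongr
      exact hXsub k hk
    _ = c * (r ^ θ * ∑ j ∈ Icc 1 k, X j ^ θ) ^ s := by
      rw [Real.mul_rpow (by positivity) hsum_nonneg, ← Real.rpow_mul hr0.le, mul_comm θ s]
      ring
    _ ≤ c * (∑ j ∈ Icc 1 k, A j ^ θ) ^ s := by gcongr
    _ ≤ r * X k := (hAsup k hk).trans hrX.ge
  have hr_lt : r < r ^ (s * θ) := by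
    simpa using Real.rpow_lt_rpow_of_exponent_gt hr0 hr1 hsθ
  exact (le_of_mul_le_mul_right hhom hXk).not_gt hr_lt

noncomputable def powerBarrier (c θ s : ℝ) (k : ℕ) : ℝ :=
  (c * (1 - s * θ) ^ s) ^ (1 - s * θ)⁻¹ * (k : ℝ) ^ (s * (1 - s * θ)⁻¹)

theorem powerBarrier_nonneg (hc : 0 ≤ c) (hsθ : s * θ < 1) (k : ℕ) :
    0 ≤ powerBarrier c θ s k := by
  have : 0 < 1 - s * θ := by linarith
  unfold powerBarrier
  positivity

theorem powerBarrier_le_mul_sum_rpow (hc : 0 ≤ c) (hθ : 0 ≤ θ) (hs : 0 ≤ s)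
    (hsθ : s * θ < 1) (k : ℕ) :
    powerBarrier c θ s k ≤ c * (∑ j ∈ Icc 1 k, powerBarrier c θ s j ^ θ) ^ s := by
  set g := 1 - s * θ
  have hg : 0 < g := by linarith
  set E := (c * g ^ s) ^ g⁻¹
  have hE : 0 ≤ E := by positivity
  have hγ : 1 ≤ g⁻¹ := by rw [one_le_inv₀ hg]; nlinarith
  have hterm : ∀ j : ℕ, powerBarrier c θ s j ^ θ = E ^ θ * (j : ℝ) ^ (g⁻¹ - 1) := by
    intro j
    rw [powerBarrier, Real.mul_rpow hE (by positivity), ← Real.rpow_mul (Nat.cast_nonneg j)]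
    congr 2
    field_simp [g]
    ring
  have hsum : E ^ θ * (g * (k : ℝ) ^ g⁻¹) ≤ ∑ j ∈ Icc 1 k, powerBarrier c θ s j ^ θ := by
    simp_rw [hterm, ← mul_sum]
    gcongr
    simpa [div_eq_mul_inv, mul_comm] using div_le_sum_Icc_rpow_sub_one hγ k
  calc powerBarrier c θ s k = E ^ g * E ^ (s * θ) * (k : ℝ) ^ (s * g⁻¹) := by
        rw [← Real.rpow_add' hE (by simp [g]), sub_add_cancel, Real.rpow_one, powerBarrier]
    _ = c * (E ^ θ * (g * (k : ℝ) ^ g⁻¹)) ^ s := by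
        rw [Real.rpow_inv_rpow (by positivity) hg.ne',
          Real.mul_rpow (by positivity) (by positivity), Real.mul_rpow hg.le (by positivity),
          ← Real.rpow_mul hE, ← Real.rpow_mul (Nat.cast_nonneg k)]
        ring_nf
    _ ≤ c * (∑ j ∈ Icc 1 k, powerBarrier c θ s j ^ θ) ^ s := by gcongr

theorem stmt3 (d : ℕ) (hd : 2 ≤ d) (p q C T : ℝ)
    (hp : p = (3 * (d : ℝ) + 1) / (2 * ((d : ℝ) + 1)))
    (hq : q = (3 * (d : ℝ) + 1) / ((d : ℝ) - 1))
    (hC : 0 < C)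
    (hT : T = (1 / 4 : ℝ) * C ^ (-(2 * p / q)) * (2 / ((d : ℝ) + 1)) ^ (2 * p))
    (A : ℕ → ℝ) (hApos : ∀ k : ℕ, 1 ≤ k → 0 < A k)
    (hrec : ∀ k : ℕ, 1 ≤ k →
      (1 / 4 : ℝ) * C ^ (-(2 * p / q)) *
          (∑ j ∈ Finset.Icc 1 k, A j ^ (1 / q)) ^ (2 * p) ≤ A k) :
    ∀ k : ℕ, 1 ≤ k → T ^ (((d : ℝ) + 1) / 2) * (k : ℝ) ^ ((3 * (d : ℝ) + 1) / 2) ≤ A k := by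
  have hd' : (2 : ℝ) ≤ d := by exact_mod_cast hd
  have hd1 : (0 : ℝ) < d - 1 := by linarith
  have hθ : 0 ≤ 1 / q := by rw [hq]; positivity
  have hs : 0 ≤ 2 * p := by rw [hp]; positivity
  have hc : 0 ≤ (1 / 4 : ℝ) * C ^ (-(2 * p / q)) := by positivity
  have hgap : 1 - 2 * p * (1 / q) = 2 / ((d : ℝ) + 1) := by
    rw [hp, hq]; field_simp; ring
  have hsθ : 2 * p * (1 / q) < 1 := by
    have : 0 < 2 / ((d : ℝ) + 1) := by positivity
    linarith
  intro k hk
  convert sum_rpow_recursion_comparison hc hθ hs hsθ (fun j _ => powerBarrier_nonneg hc hsθ j)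
    hApos (fun j _ => powerBarrier_le_mul_sum_rpow hc hθ hs hsθ j) hrec k hk using 1
  rw [powerBarrier, hgap, ← hT, inv_div, hp]
  field_simp
end

section
/- Let E be a finite-dimensional real inner product space, d ≥ 2 an integer, L_d > 0, M ≥ 0, f : E → ℝ d times continuously differentiable with L_d-Lipschitz d-th derivative, and h : E → ℝ convex. Let ρ̄ > 0, ε̄ > 0, σ̂ ≥ 0 and α > 0 be given with σ := σ̂ + ((L_d + M)/d!)·α < 1. Suppose λ > 0 satisfies λ ≥ max{ α^{1/d}·[(1/ρ̄)·(1 + σ̂ + ((L_d + M)/d!)·α)]^{1 − 1/d}, (σ²·α^{2/(d−1)}/(2ε̄))^{(d−1)/(d+1)} }, and that (y, u, ε) is a σ̂-approximate solution at (λ, x) for some x ∈ E. Then at least one of the following holds: (a) λ·‖y − x‖^{d−1} > α; or (b) the vector v := ∇f(y) − ∇f_x(y) + u satisfies ‖v‖ ≤ ρ̄ and ε ≤ ε̄. -/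
open scoped RealInnerProductSpace BigOperators

/-- The regularized `d`-th order Taylor approximation of `f` at `x`. -/
noncomputable def taylorReg {E : Type*} [NormedAddCommGroup E] [InnerProductSpace ℝ E]
    (f : E → ℝ) (d : ℕ) (M : ℝ) (x y : E) : ℝ :=
  ∑ i ∈ Finset.range (d + 1),
      (1 / (i.factorial : ℝ)) * iteratedFDeriv ℝ i f x (fun _ => y - x) +
    M / ((d + 1).factorial : ℝ) * ‖y - x‖ ^ (d + 1)

/-- The ε-subdifferential of a convex function `h` at `y`. -/
def epsSubdiff {E : Type*} [NormedAddCommGroup E] [InnerProductSpace ℝ E]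
    (h : E → ℝ) (ε : ℝ) (y : E) : Set E :=
  {u | ∀ z : E, h y + ⟪u, z - y⟫ - ε ≤ h z}

/-!
Split on whether `λ‖y - x‖^(d-1) ≤ α`. In that case Taylor's theorem for `∇f`, whose
`(d-1)`-th derivative is `L_d`-Lipschitz, bounds `‖∇f(y) - ∇f_x(y)‖` by
`(L_d + M)/d! · ‖y - x‖^d`; here symmetry of the iterated derivatives is what makes the gradient
of the Taylor polynomial of `f` the Taylor polynomial of `∇f`. Together with
`‖λu + y - x‖ ≤ σ̂‖y - x‖` this gives `λ‖v‖ ≤ (1 + σ̂ + (L_d + M)α/d!)‖y - x‖` and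
`2λε ≤ σ²‖y - x‖²`, and the two lower bounds on `λ` are exactly what turns
`‖y - x‖^(d-1) ≤ α/λ` into `‖v‖ ≤ ρ̄` and `ε ≤ ε̄`.
-/

open Finset

section OneDimensional

variable {G : Type*} [NormedAddCommGroup G] [NormedSpace ℝ G]

theorem hasDerivAt_sum_pow_div_factorial_smul (n : ℕ) (c : ℕ → G) (s : ℝ) :
    HasDerivAt (fun t : ℝ => ∑ i ∈ range (n + 1), (t ^ i / i.factorial) • c i)
      (∑ i ∈ range n, (s ^ i / i.factorial) • c (i + 1)) s := by
  have hsum := HasDerivAt.fun_sum (u := range (n + 1)) fun i _ =>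
    ((hasDerivAt_pow i s).div_const (i.factorial : ℝ)).smul_const (c i)
  convert hsum using 1
  rw [sum_range_succ']
  simp only [Nat.cast_zero, zero_mul, zero_div, zero_smul, add_zero, Nat.add_sub_cancel,
    Nat.factorial_succ, Nat.cast_mul]
  refine sum_congr rfl fun i _ => ?_
  rw [mul_div_mul_left _ _ (by positivity)]

theorem norm_sub_sum_iteratedDeriv_le_of_lipschitz (n : ℕ) {φ : ℝ → G} (hφ : ContDiff ℝ n φ)
    {L : ℝ} (hLip : ∀ s t, ‖iteratedDeriv n φ s - iteratedDeriv n φ t‖ ≤ L * |s - t|)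
    {t : ℝ} (ht : 0 ≤ t) :
    ‖φ t - ∑ i ∈ range (n + 1), (t ^ i / i.factorial) • iteratedDeriv i φ 0‖
      ≤ L * t ^ (n + 1) / (n + 1).factorial := by
  induction n generalizing φ t with
  | zero => simpa [abs_of_nonneg ht] using hLip t 0
  | succ n ih =>
    have hdiff : Differentiable ℝ φ := hφ.differentiable (by simp)
    have hψ : ContDiff ℝ n (deriv φ) := (contDiff_succ_iff_deriv.mp hφ).2.2
    have hiter (i : ℕ) : iteratedDeriv (i + 1) φ = iteratedDeriv i (deriv φ) :=
      iteratedDeriv_succ'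
    set g := fun s : ℝ => φ s - ∑ i ∈ range (n + 2), (s ^ i / i.factorial) • iteratedDeriv i φ 0
    have hg : ∀ s, HasDerivAt g (deriv φ s -
        ∑ i ∈ range (n + 1), (s ^ i / i.factorial) • iteratedDeriv i (deriv φ) 0) s := by
      intro s
      simp only [← hiter]
      exact (hdiff s).hasDerivAt.sub (hasDerivAt_sum_pow_div_factorial_smul _ _ s)
    have hB : ∀ s, HasDerivAt (fun s => L * s ^ (n + 2) / (n + 2).factorial)
        (L * s ^ (n + 1) / (n + 1).factorial) s := by
      intro s
      refine (((hasDerivAt_pow (n + 2) s).const_mul L).div_const _).congr_deriv ?_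
      rw [Nat.factorial_succ (n + 1)]
      push_cast
      field_simp
      ring
    -- `g` vanishes at `0` and its derivative is the order-`n` remainder of `deriv φ`,
    -- which the induction hypothesis bounds by the derivative of the claimed bound.
    refine image_norm_le_of_norm_deriv_right_le_deriv_boundary (f := g) (a := 0)
      (hdiff.continuous.sub (by fun_prop)).continuousOn (fun s _ => (hg s).hasDerivWithinAt)
      (by simp [g, sum_range_succ']) hB
      (fun s hs => ih hψ (fun a b => hiter n ▸ hLip a b) hs.1) ⟨ht, le_rfl⟩

end OneDimensional

section Symmetry

variable {E G : Type*} [NormedAddCommGroup E] [NormedSpace ℝ E]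
  [NormedAddCommGroup G] [NormedSpace ℝ G] {f : E → G}

theorem fderiv_iteratedFDeriv_apply {n : ℕ} (hf : ContDiff ℝ (n + 1) f) (x a : E)
    (m : Fin n → E) :
    fderiv ℝ (fun z => iteratedFDeriv ℝ n f z m) x a =
      iteratedFDeriv ℝ (n + 1) f x (Fin.cons a m) := by
  rw [fderiv_continuousMultilinear_apply_const_apply
    (hf.differentiable_iteratedFDeriv (by norm_cast; omega) x), iteratedFDeriv_succ_apply_left,
    Fin.cons_zero, Fin.tail_cons]

theorem iteratedFDeriv_cons_cons_comm {n : ℕ} (hf : ContDiff ℝ (n + 2) f) (x a b : E)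
    (m : Fin n → E) :
    iteratedFDeriv ℝ (n + 2) f x (Fin.cons a (Fin.cons b m)) =
      iteratedFDeriv ℝ (n + 2) f x (Fin.cons b (Fin.cons a m)) := by
  set φ := fun z => iteratedFDeriv ℝ n f z m
  have hφ : ContDiff ℝ 2 φ :=
    (ContinuousMultilinearMap.apply ℝ (fun _ : Fin n => E) G m).contDiff.comp
      (hf.iteratedFDeriv_right (m := 2) (i := n) (by rw [add_comm]))
  have hφ' : ∀ z b, fderiv ℝ φ z b = iteratedFDeriv ℝ (n + 1) f z (Fin.cons b m) :=
    fun z b => fderiv_iteratedFDeriv_apply (hf.of_le (by norm_cast; omega)) z b m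
  have hsecond : ∀ a b, iteratedFDeriv ℝ (n + 2) f x (Fin.cons a (Fin.cons b m)) =
      fderiv ℝ (fderiv ℝ φ) x a b := by
    intro a b
    have hDφ : DifferentiableAt ℝ (fderiv ℝ φ) x :=
      (hφ.fderiv_right (m := 1) (by norm_num)).differentiable one_ne_zero x
    rw [← fderiv_iteratedFDeriv_apply hf, ← funext fun z => hφ' z b,
      fderiv_clm_apply hDφ (differentiableAt_const b)]
    simp
  rw [hsecond, hsecond, (hφ.contDiffAt.isSymmSndFDerivAt (by simp)) a b]

theorem iteratedFDeriv_update_eq_update_zero {n : ℕ} (hf : ContDiff ℝ (n + 1) f)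
    (x v h : E) (j : Fin (n + 1)) :
    iteratedFDeriv ℝ (n + 1) f x (Function.update (fun _ => v) j h) =
      iteratedFDeriv ℝ (n + 1) f x (Function.update (fun _ => v) 0 h) := by
  -- Slot `j + 1` is slot `j` of the derivative of `iteratedFDeriv ℝ (n + 1) f`, and slots `0`
  -- and `1` are exchanged by the symmetry of second derivatives.
  induction n generalizing x with
  | zero => rw [Fin.fin_one_eq_zero j]
  | succ n ih =>
    have hconst : ∀ k : ℕ, (fun _ : Fin (k + 1) => v) = Fin.cons v (fun _ => v) := fun k =>
      funext fun i => by cases i using Fin.cases <;> rfl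
    cases j using Fin.cases with
    | zero => rfl
    | succ j =>
      have hih : (fun z => iteratedFDeriv ℝ (n + 1) f z (Function.update (fun _ => v) j h)) =
          fun z => iteratedFDeriv ℝ (n + 1) f z (Function.update (fun _ => v) 0 h) :=
        funext fun z => ih (hf.of_le (by norm_cast; omega)) z j
      rw [hconst (n + 1), ← Fin.cons_update, ← fderiv_iteratedFDeriv_apply hf, hih,
        fderiv_iteratedFDeriv_apply hf, hconst n, Fin.update_cons_zero, Fin.update_cons_zero]
      exact iteratedFDeriv_cons_cons_comm hf x v h _

theorem sum_iteratedFDeriv_update {n : ℕ} (hf : ContDiff ℝ (n + 1) f) (x v h : E) :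
    ∑ j : Fin (n + 1), iteratedFDeriv ℝ (n + 1) f x (Function.update (fun _ => v) j h) =
      (n + 1) • iteratedFDeriv ℝ n (fderiv ℝ f) x (fun _ => v) h := by
  have hlast : ∀ j : Fin (n + 1),
      iteratedFDeriv ℝ (n + 1) f x (Function.update (fun _ => v) j h) =
        iteratedFDeriv ℝ n (fderiv ℝ f) x (fun _ => v) h := by
    intro j
    rw [iteratedFDeriv_update_eq_update_zero hf, ← iteratedFDeriv_update_eq_update_zero hf x v h
      (Fin.last n), iteratedFDeriv_succ_apply_right, Fin.init_update_last, Function.update_self]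
    rfl
  simp [hlast]

end Symmetry

section Taylor

variable {E G : Type*} [NormedAddCommGroup E] [NormedSpace ℝ E]
  [NormedAddCommGroup G] [NormedSpace ℝ G] {f : E → G}

theorem iteratedDeriv_comp_add_smul {n : ℕ} (hf : ContDiff ℝ n f) (x v : E) (t : ℝ) :
    iteratedDeriv n (fun s : ℝ => f (x + s • v)) t =
      iteratedFDeriv ℝ n f (x + t • v) (fun _ => v) := by
  have hline : (fun s : ℝ => f (x + s • v)) =
      (fun z => f (x + z)) ∘ ContinuousLinearMap.toSpanSingleton ℝ v := rfl
  rw [iteratedDeriv_eq_iteratedFDeriv, hline, ContinuousLinearMap.iteratedFDeriv_comp_right _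
    (f := fun z => f (x + z)) (hf.comp (by fun_prop)) _ le_rfl]
  simp [iteratedFDeriv_comp_add_left]

theorem norm_sub_taylor_le_of_lipschitz {n : ℕ} (hf : ContDiff ℝ n f) {L : ℝ}
    (hLip : ∀ a b, ‖iteratedFDeriv ℝ n f a - iteratedFDeriv ℝ n f b‖ ≤ L * ‖a - b‖) (x y : E) :
    ‖f y - ∑ i ∈ range (n + 1), (1 / (i.factorial : ℝ)) • iteratedFDeriv ℝ i f x (fun _ => y - x)‖
      ≤ L / (n + 1).factorial * ‖y - x‖ ^ (n + 1) := by
  set v := y - x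
  have hφ : ContDiff ℝ n (fun s : ℝ => f (x + s • v)) := hf.comp (by fun_prop)
  have hφLip : ∀ s t : ℝ, ‖iteratedDeriv n (fun s : ℝ => f (x + s • v)) s -
      iteratedDeriv n (fun s : ℝ => f (x + s • v)) t‖ ≤ L * ‖v‖ ^ (n + 1) * |s - t| := by
    intro s t
    rw [iteratedDeriv_comp_add_smul hf, iteratedDeriv_comp_add_smul hf, ← sub_apply]
    calc _ ≤ ‖iteratedFDeriv ℝ n f (x + s • v) - iteratedFDeriv ℝ n f (x + t • v)‖ * ‖v‖ ^ n := by
          simpa using (iteratedFDeriv ℝ n f (x + s • v) -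
            iteratedFDeriv ℝ n f (x + t • v)).le_opNorm (fun _ => v)
      _ ≤ L * ‖(x + s • v) - (x + t • v)‖ * ‖v‖ ^ n := by gcongr; exact hLip _ _
      _ = L * ‖v‖ ^ (n + 1) * |s - t| := by
          rw [add_sub_add_left_eq_sub, ← sub_smul, norm_smul, Real.norm_eq_abs]
          ring
  have htaylor := norm_sub_sum_iteratedDeriv_le_of_lipschitz n hφ hφLip zero_le_one
  have hcoeff : ∀ i ∈ range (n + 1), ((1 : ℝ) ^ i / i.factorial) •
      iteratedDeriv i (fun s : ℝ => f (x + s • v)) 0 =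
        (1 / (i.factorial : ℝ)) • iteratedFDeriv ℝ i f x (fun _ => v) := by
    intro i hi
    have hi' : (i : WithTop ℕ∞) ≤ n := by exact_mod_cast Nat.lt_succ_iff.mp (mem_range.mp hi)
    rw [iteratedDeriv_comp_add_smul (hf.of_le hi'), zero_smul, add_zero, one_pow]
  rw [sum_congr rfl hcoeff, one_smul, add_sub_cancel] at htaylor
  simpa [mul_div_right_comm] using htaylor


theorem hasFDerivAt_sum_iteratedFDeriv_sub {n : ℕ} (hf : ContDiff ℝ n f) (x y : E) :
    HasFDerivAt
      (fun z => ∑ i ∈ range (n + 1),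
        (1 / (i.factorial : ℝ)) • iteratedFDeriv ℝ i f x (fun _ => z - x))
      (∑ k ∈ range n,
        (1 / (k.factorial : ℝ)) • iteratedFDeriv ℝ k (fderiv ℝ f) x (fun _ => y - x)) y := by
  have hterm : ∀ i ∈ range (n + 1), HasFDerivAt
      (fun z => (1 / (i.factorial : ℝ)) • iteratedFDeriv ℝ i f x (fun _ => z - x))
      ((1 / (i.factorial : ℝ)) • ∑ j : Fin i,
        (iteratedFDeriv ℝ i f x).toContinuousLinearMap (fun _ => y - x) j ∘L
          ContinuousLinearMap.id ℝ E) y := fun i _ =>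
    (HasFDerivAt.multilinear_comp (f := iteratedFDeriv ℝ i f x)
      fun _ => (hasFDerivAt_id y).sub_const x).const_smul _
  refine (HasFDerivAt.fun_sum hterm).congr_fderiv (ContinuousLinearMap.ext fun h => ?_)
  simp only [_root_.sum_apply, smul_apply, ContinuousLinearMap.comp_apply,
    ContinuousMultilinearMap.toContinuousLinearMap_apply, ContinuousLinearMap.id_apply]
  rw [sum_range_succ', univ_eq_empty, sum_empty, smul_zero, add_zero]
  refine sum_congr rfl fun k hk => ?_
  have hk' : ((k + 1 : ℕ) : WithTop ℕ∞) ≤ n := by exact_mod_cast mem_range.mp hk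
  rw [sum_iteratedFDeriv_update (hf.of_le hk'), Nat.factorial_succ, Nat.cast_mul,
    ← Nat.cast_smul_eq_nsmul ℝ, smul_smul]
  congr 1
  field_simp

end Taylor

section Regularized

variable {E : Type*} [NormedAddCommGroup E] [InnerProductSpace ℝ E]

theorem hasFDerivAt_norm_sub_pow {p : ℕ} (hp : 2 ≤ p) (x y : E) :
    HasFDerivAt (fun z => ‖z - x‖ ^ p) ((p * ‖y - x‖ ^ (p - 2)) • innerSL ℝ (y - x)) y := by
  have hrpow := (hasFDerivAt_norm_rpow (y - x) (p := p) (by exact_mod_cast hp)).comp y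
    ((hasFDerivAt_id y).sub_const x)
  have hexp : (p : ℝ) - 2 = ((p - 2 : ℕ) : ℝ) := by rw [Nat.cast_sub hp, Nat.cast_ofNat]
  simp only [Real.rpow_natCast, hexp] at hrpow
  exact hrpow

theorem norm_gradient_sub_gradient_taylorReg_le [CompleteSpace E] {f : E → ℝ} {d : ℕ} (hd : 1 ≤ d)
    (hf : ContDiff ℝ d f) {L M : ℝ} (hM : 0 ≤ M)
    (hLip : ∀ a b, ‖iteratedFDeriv ℝ d f a - iteratedFDeriv ℝ d f b‖ ≤ L * ‖a - b‖) (x y : E) :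
    ‖gradient f y - gradient (taylorReg f d M x) y‖ ≤ (L + M) / d.factorial * ‖y - x‖ ^ d := by
  obtain ⟨n, rfl⟩ : ∃ n, d = n + 1 := ⟨d - 1, by omega⟩
  have hDf : ContDiff ℝ n (fderiv ℝ f) := hf.fderiv_right le_rfl
  have hLipDf : ∀ a b, ‖iteratedFDeriv ℝ n (fderiv ℝ f) a - iteratedFDeriv ℝ n (fderiv ℝ f) b‖
      ≤ L * ‖a - b‖ := by
    intro a b
    simpa only [iteratedFDeriv_succ_eq_comp_right, Function.comp_apply,
      ← LinearIsometryEquiv.map_sub, LinearIsometryEquiv.norm_map] using hLip a b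
  set S := ∑ k ∈ range (n + 1),
    (1 / (k.factorial : ℝ)) • iteratedFDeriv ℝ k (fderiv ℝ f) x (fun _ => y - x)
  set R := (M / ((n + 1 + 1).factorial : ℝ)) •
    (((n + 2 : ℕ) : ℝ) * ‖y - x‖ ^ (n + 2 - 2)) • innerSL ℝ (y - x)
  have hderiv : HasFDerivAt (taylorReg f (n + 1) M x) (S + R) y :=
    (hasFDerivAt_sum_iteratedFDeriv_sub hf x y).add
      ((hasFDerivAt_norm_sub_pow (p := n + 2) (by omega) x y).const_mul _)
  have hR : ‖R‖ = M / (n + 1).factorial * ‖y - x‖ ^ (n + 1) := by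
    rw [norm_smul, norm_smul, innerSL_apply_norm, Real.norm_of_nonneg (by positivity),
      Real.norm_of_nonneg (by positivity), Nat.add_sub_cancel, Nat.factorial_succ (n + 1)]
    push_cast
    field_simp
    ring
  rw [gradient, gradient, ← LinearIsometryEquiv.map_sub, LinearIsometryEquiv.norm_map,
    hderiv.fderiv, ← sub_sub]
  calc ‖fderiv ℝ f y - S - R‖ ≤ ‖fderiv ℝ f y - S‖ + ‖R‖ := norm_sub_le _ _
    _ ≤ L / (n + 1).factorial * ‖y - x‖ ^ (n + 1) + M / (n + 1).factorial * ‖y - x‖ ^ (n + 1) :=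
        add_le_add (norm_sub_taylor_le_of_lipschitz hDf hLipDf x y) hR.le
    _ = (L + M) / (n + 1).factorial * ‖y - x‖ ^ (n + 1) := by ring

end Regularized

theorem mul_norm_add_le_of_norm_le_mul_pow {F : Type*} [NormedAddCommGroup F] [NormedSpace ℝ F]
    {d : ℕ} (hd : 1 ≤ d) {lam K α σh : ℝ} (hlam : 0 ≤ lam) (hK : 0 ≤ K) {w u x y : F}
    (hw : ‖w‖ ≤ K * ‖y - x‖ ^ d) (hrad : lam * ‖y - x‖ ^ (d - 1) ≤ α)
    (hres : ‖lam • u + y - x‖ ≤ σh * ‖y - x‖) :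
    lam * ‖w + u‖ ≤ (1 + σh + K * α) * ‖y - x‖ := by
  have hlamw : lam * ‖w‖ ≤ K * α * ‖y - x‖ :=
    calc lam * ‖w‖ ≤ lam * (K * ‖y - x‖ ^ d) := by gcongr
      _ = K * ‖y - x‖ * (lam * ‖y - x‖ ^ (d - 1)) := by
          rw [← Nat.sub_add_cancel hd, pow_succ, Nat.add_sub_cancel]; ring
      _ ≤ K * ‖y - x‖ * α := by gcongr
      _ = K * α * ‖y - x‖ := by ring
  calc lam * ‖w + u‖ = ‖lam • w + (lam • u + y - x) - (y - x)‖ := by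
        rw [show lam • w + (lam • u + y - x) - (y - x) = lam • (w + u) by rw [smul_add]; abel,
          norm_smul, Real.norm_of_nonneg hlam]
    _ ≤ ‖lam • w‖ + ‖lam • u + y - x‖ + ‖y - x‖ :=
        (norm_sub_le _ _).trans (add_le_add_left (norm_add_le _ _) _)
    _ ≤ (1 + σh + K * α) * ‖y - x‖ := by
        rw [norm_smul, Real.norm_of_nonneg hlam]
        linarith

theorem mul_le_mul_of_pow_le_of_rpow_le {d : ℕ} (hd : 2 ≤ d) {α lam c ρ r : ℝ} (hα : 0 ≤ α)
    (hlam : 0 < lam) (hc : 0 ≤ c) (hρ : 0 < ρ) (hrad : lam * r ^ (d - 1) ≤ α)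
    (hlam_ge : α ^ (1 / (d : ℝ)) * (1 / ρ * c) ^ (1 - 1 / (d : ℝ)) ≤ lam) :
    c * r ≤ lam * ρ := by
  set q := 1 / ρ * c
  have hq : 0 ≤ q := by positivity
  have hd0 : (d : ℝ) ≠ 0 := by positivity
  have hpow : α * q ^ (d - 1) ≤ lam ^ d := by
    have hexp : (1 - 1 / (d : ℝ)) * d = ((d - 1 : ℕ) : ℝ) := by
      rw [Nat.cast_sub (by omega), Nat.cast_one]
      field_simp
    have := pow_le_pow_left₀ (by positivity) hlam_ge d
    rwa [mul_pow, ← Real.rpow_mul_natCast hα, ← Real.rpow_mul_natCast hq, one_div_mul_cancel hd0,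
      Real.rpow_one, hexp, Real.rpow_natCast] at this
  have hqr : q * r ≤ lam := by
    refine le_of_pow_le_pow_left₀ (by omega : d - 1 ≠ 0) hlam.le
      (le_of_mul_le_mul_right ?_ hlam)
    calc (q * r) ^ (d - 1) * lam = q ^ (d - 1) * (lam * r ^ (d - 1)) := by ring
      _ ≤ q ^ (d - 1) * α := by gcongr
      _ ≤ lam ^ d := by linarith
      _ = lam ^ (d - 1) * lam := by rw [← pow_succ, Nat.sub_add_cancel (by omega)]
  calc c * r = ρ * (q * r) := by simp only [q]; field_simp
    _ ≤ ρ * lam := by gcongr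
    _ = lam * ρ := mul_comm _ _

theorem sq_mul_sq_le_of_pow_le_of_rpow_le {d : ℕ} (hd : 2 ≤ d) {α lam σ εb r : ℝ} (hα : 0 ≤ α)
    (hlam : 0 < lam) (hεb : 0 < εb) (hr : 0 ≤ r) (hrad : lam * r ^ (d - 1) ≤ α)
    (hlam_ge : (σ ^ 2 * α ^ (2 / ((d : ℝ) - 1)) / (2 * εb)) ^ (((d : ℝ) - 1) / ((d : ℝ) + 1))
      ≤ lam) :
    σ ^ 2 * r ^ 2 ≤ 2 * lam * εb := by
  obtain ⟨p, rfl⟩ : ∃ p, d = p + 1 := ⟨d - 1, by omega⟩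
  simp only [Nat.add_sub_cancel, Nat.cast_add, Nat.cast_one, add_sub_cancel_right] at hrad hlam_ge
  have hp : (p : ℝ) ≠ 0 := by norm_cast; omega
  set B := σ ^ 2 * α ^ (2 / (p : ℝ)) / (2 * εb)
  have hB : 0 ≤ B := by positivity
  have hBp : B ^ p = (σ ^ 2) ^ p * α ^ 2 / (2 * εb) ^ p := by
    rw [div_pow, mul_pow, ← Real.rpow_mul_natCast hα, div_mul_cancel₀ _ hp, Real.rpow_two]
  have hpow : B ^ p ≤ lam ^ (p + 2) := by
    have := pow_le_pow_left₀ (by positivity) hlam_ge (p + 2)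
    rwa [← Real.rpow_mul_natCast hB, show ((p + 2 : ℕ) : ℝ) = p + 1 + 1 by push_cast; ring,
      div_mul_cancel₀ _ (by positivity), Real.rpow_natCast] at this
  rw [hBp, div_le_iff₀ (by positivity)] at hpow
  refine le_of_pow_le_pow_left₀ (by omega : p ≠ 0) (by positivity)
    (le_of_mul_le_mul_right ?_ (by positivity : 0 < lam ^ 2))
  calc (σ ^ 2 * r ^ 2) ^ p * lam ^ 2 = (σ ^ 2) ^ p * (lam * r ^ p) ^ 2 := by ring
    _ ≤ (σ ^ 2) ^ p * α ^ 2 := by gcongr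
    _ ≤ lam ^ (p + 2) * (2 * εb) ^ p := hpow
    _ = (2 * lam * εb) ^ p * lam ^ 2 := by ring

theorem stmt5_general {E : Type*} [NormedAddCommGroup E] [InnerProductSpace ℝ E]
    [FiniteDimensional ℝ E]
    (d : ℕ) (hd : 2 ≤ d) (Ld M : ℝ) (hLd : 0 < Ld) (hM : 0 ≤ M)
    (f : E → ℝ) (hf : ContDiff ℝ (d : ℕ∞) f)
    (hLip : ∀ x y : E, ‖iteratedFDeriv ℝ d f x - iteratedFDeriv ℝ d f y‖ ≤ Ld * ‖x - y‖)
    (ρb εb σh α σ : ℝ) (hρb : 0 < ρb) (hεb : 0 < εb) (hσh : 0 ≤ σh) (hα : 0 < α)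
    (hσdef : σ = σh + (Ld + M) / (d.factorial : ℝ) * α)
    (lam : ℝ) (hlam : 0 < lam)
    (hlamge : max
        (α ^ (1 / (d : ℝ)) *
          (1 / ρb * (1 + σh + (Ld + M) / (d.factorial : ℝ) * α)) ^ (1 - 1 / (d : ℝ)))
        ((σ ^ 2 * α ^ (2 / ((d : ℝ) - 1)) / (2 * εb)) ^ (((d : ℝ) - 1) / ((d : ℝ) + 1)))
      ≤ lam)
    (x y u : E) (ε : ℝ) (hε : 0 ≤ ε)
    -- (y, u, ε) is a σ̂-approximate solution at (λ, x):
    (happrox2 : ‖lam • u + y - x‖ ^ 2 + 2 * lam * ε ≤ σh ^ 2 * ‖y - x‖ ^ 2) :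
    α < lam * ‖y - x‖ ^ (d - 1) ∨
      (‖gradient f y - gradient (taylorReg f d M x) y + u‖ ≤ ρb ∧ ε ≤ εb) := by
  refine (lt_or_ge α (lam * ‖y - x‖ ^ (d - 1))).imp_right fun hrad => ?_
  set K := (Ld + M) / (d.factorial : ℝ)
  have hK : 0 ≤ K := by positivity
  have hres : ‖lam • u + y - x‖ ≤ σh * ‖y - x‖ :=
    (pow_le_pow_iff_left₀ (norm_nonneg _) (by positivity) two_ne_zero).mp (by nlinarith)
  have hσ : σh ≤ σ := by rw [hσdef]; linarith [mul_nonneg hK hα.le]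
  have hεσ : 2 * lam * ε ≤ σ ^ 2 * ‖y - x‖ ^ 2 :=
    calc 2 * lam * ε ≤ σh ^ 2 * ‖y - x‖ ^ 2 := by nlinarith [sq_nonneg ‖lam • u + y - x‖]
      _ ≤ σ ^ 2 * ‖y - x‖ ^ 2 := by gcongr
  have hv := mul_norm_add_le_of_norm_le_mul_pow (by omega) hlam.le hK
    (norm_gradient_sub_gradient_taylorReg_le (by omega) hf hM hLip x y) hrad hres
  obtain ⟨hlam₁, hlam₂⟩ := max_le_iff.mp hlamge
  exact ⟨le_of_mul_le_mul_left (hv.trans (mul_le_mul_of_pow_le_of_rpow_le hd hα.le hlam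
      (by positivity) hρb hrad hlam₁)) hlam,
    le_of_mul_le_mul_left (hεσ.trans (sq_mul_sq_le_of_pow_le_of_rpow_le hd hα.le hlam hεb
      (norm_nonneg _) hrad hlam₂)) (by positivity)⟩

theorem stmt5 {E : Type*} [NormedAddCommGroup E] [InnerProductSpace ℝ E]
    [FiniteDimensional ℝ E]
    (d : ℕ) (hd : 2 ≤ d) (Ld M : ℝ) (hLd : 0 < Ld) (hM : 0 ≤ M)
    (f : E → ℝ) (hf : ContDiff ℝ (d : ℕ∞) f)
    (hLip : ∀ x y : E, ‖iteratedFDeriv ℝ d f x - iteratedFDeriv ℝ d f y‖ ≤ Ld * ‖x - y‖)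
    (h : E → ℝ) (hh : ConvexOn ℝ Set.univ h)
    (ρb εb σh α σ : ℝ) (hρb : 0 < ρb) (hεb : 0 < εb) (hσh : 0 ≤ σh) (hα : 0 < α)
    (hσdef : σ = σh + (Ld + M) / (d.factorial : ℝ) * α) (hσ1 : σ < 1)
    (lam : ℝ) (hlam : 0 < lam)
    (hlamge : max
        (α ^ (1 / (d : ℝ)) *
          (1 / ρb * (1 + σh + (Ld + M) / (d.factorial : ℝ) * α)) ^ (1 - 1 / (d : ℝ)))
        ((σ ^ 2 * α ^ (2 / ((d : ℝ) - 1)) / (2 * εb)) ^ (((d : ℝ) - 1) / ((d : ℝ) + 1)))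
      ≤ lam)
    (x y u : E) (ε : ℝ) (hε : 0 ≤ ε)
    -- (y, u, ε) is a σ̂-approximate solution at (λ, x):
    (happrox1 : u - gradient (taylorReg f d M x) y ∈ epsSubdiff h ε y)
    (happrox2 : ‖lam • u + y - x‖ ^ 2 + 2 * lam * ε ≤ σh ^ 2 * ‖y - x‖ ^ 2) :
    α < lam * ‖y - x‖ ^ (d - 1) ∨
      (‖gradient f y - gradient (taylorReg f d M x) y + u‖ ≤ ρb ∧ ε ≤ εb) :=
  stmt5_general d hd Ld M hLd hM f hf hLip ρb εb σh α σ hρb hεb hσh hα hσdef lam hlam hlamge x y u ε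
    hε happrox2
end
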